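/- For all i, j ∈ ℤ₊, in Ĥ one has ĉ_i · ĉ_j = σ̂_{i,j}. -/

import Mathlib

namespace HatAlgebra

/-- Basis of the algebra `Ĥ`: vectors `â i` for `i : ℤ`, `ŝ_{0̄,j}` for `j` a positive
integer, and `ŝ_{1̄,3k}`, `ŝ_{2̄,3k}` for `k` a positive integer. -/
inductive HatB : Type
  | a : ℤ → HatB
  | s0 : ℕ+ → HatB
  | s1 : ℕ+ → HatB
  | s2 : ℕ+ → HatB
  deriving DecidableEq

variable (F : Type*) [Field F]

/-- The underlying vector space of `Ĥ`: the free `F`-vector space on `HatB`. -/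
abbrev HatH : Type _ := HatB →₀ F

/-- The basis vector `â i`. -/
noncomputable def aHat (i : ℤ) : HatH F := Finsupp.single (HatB.a i) 1

/-- The element `ŝ_{r̄,j}` of `Ĥ`, with the conventions `ŝ_{r̄,0} = 0` and
`ŝ_{1̄,j} = ŝ_{0̄,j} = ŝ_{2̄,j}` whenever `3 ∤ j`. -/
noncomputable def sHat (r : ZMod 3) (j : ℕ) : HatH F :=
  if h : j = 0 then 0
  else if h3 : 3 ∣ j then
    if r = 0 then Finsupp.single (HatB.s0 ⟨j, Nat.pos_of_ne_zero h⟩) 1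
    else if r = 1 then
      Finsupp.single (HatB.s1 ⟨j / 3,
        Nat.div_pos (Nat.le_of_dvd (Nat.pos_of_ne_zero h) h3) (by norm_num)⟩) 1
    else
      Finsupp.single (HatB.s2 ⟨j / 3,
        Nat.div_pos (Nat.le_of_dvd (Nat.pos_of_ne_zero h) h3) (by norm_num)⟩) 1
  else Finsupp.single (HatB.s0 ⟨j, Nat.pos_of_ne_zero h⟩) 1

/-- The operation `∗`: `(−1) ∗ 1̄ = −1`, `(−1) ∗ 2̄ = 1`, `0 ∗ t̄ = 0`. -/
def hatStar (x : ℤ) (t : ZMod 3) : ℤ :=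
  if x = 0 then 0 else if t = 1 then -1 else if t = 2 then 1 else 0

/-- The coefficient `(δ_{ī,r̄} − 1) ∗ (ī − r̄)` appearing in rule (Ĥ2). -/
def hatC (i r : ZMod 3) : ℤ := hatStar ((if i = r then 1 else 0) - 1) (i - r)

/-- Rule (Ĥ2): the product `â_i · ŝ_{r̄,j}`. -/
noncomputable def aMulS (i : ℤ) (r : ZMod 3) (j : ℕ) : HatH F :=
  (-2 : F) • aHat F i + (aHat F (i - (j : ℤ)) + aHat F (i + (j : ℤ))) - sHat F r j
    - (hatC (i : ZMod 3) r : F) • (sHat F (r - 1) j - sHat F (r + 1) j)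

/-- `ŝ_{0̄,n} + ŝ_{1̄,n} + ŝ_{2̄,n}`. -/
noncomputable def sSum (n : ℕ) : HatH F := sHat F 0 n + sHat F 1 n + sHat F 2 n

/-- For `r ≠ t` in `ℤ/3ℤ`, the signed sum `ŝ_{r̄,n} + ŝ_{t̄,n} − ŝ_{m̄,n}` where `m̄`
is the third residue class (appearing in rules (Ĥ5), (Ĥ6), (Ĥ7)). -/
noncomputable def sT (r t : ZMod 3) (n : ℕ) : HatH F :=
  sHat F r n + sHat F t n - sHat F (-(r + t)) n

/-- Rules (Ĥ3)–(Ĥ7): the product `ŝ_{r̄,i} · ŝ_{t̄,j}`. -/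
noncomputable def sMulS (r : ZMod 3) (i : ℕ) (t : ZMod 3) (j : ℕ) : HatH F :=
  if 3 ∣ i ∧ 3 ∣ j then
    if r = t then
      (2 : F) • (sHat F r i + sHat F r j) - (sHat F r (Nat.dist i j) + sHat F r (i + j))
    else
      (2 : F) • (sT F r t i + sT F r t j) - (sT F r t (Nat.dist i j) + sT F r t (i + j))
  else
    (2 : F) • (sHat F r i + sHat F t j) - (2 : F) • (sSum F (Nat.dist i j) + sSum F (i + j))

/-- The product of `Ĥ` on basis vectors, given by rules (Ĥ1)–(Ĥ7) (extended
symmetrically, since the product is commutative). -/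
noncomputable def mulB : HatB → HatB → HatH F
  | .a i, .a j => (-2 : F) • (aHat F i + aHat F j) + sHat F (i : ZMod 3) (i - j).natAbs
  | .a i, .s0 j => aMulS F i 0 (j : ℕ)
  | .s0 j, .a i => aMulS F i 0 (j : ℕ)
  | .a i, .s1 k => aMulS F i 1 (3 * (k : ℕ))
  | .s1 k, .a i => aMulS F i 1 (3 * (k : ℕ))
  | .a i, .s2 k => aMulS F i 2 (3 * (k : ℕ))
  | .s2 k, .a i => aMulS F i 2 (3 * (k : ℕ))
  | .s0 i, .s0 j => sMulS F 0 (i : ℕ) 0 (j : ℕ)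
  | .s0 i, .s1 k => sMulS F 0 (i : ℕ) 1 (3 * (k : ℕ))
  | .s1 k, .s0 i => sMulS F 0 (i : ℕ) 1 (3 * (k : ℕ))
  | .s0 i, .s2 k => sMulS F 0 (i : ℕ) 2 (3 * (k : ℕ))
  | .s2 k, .s0 i => sMulS F 0 (i : ℕ) 2 (3 * (k : ℕ))
  | .s1 h, .s1 k => sMulS F 1 (3 * (h : ℕ)) 1 (3 * (k : ℕ))
  | .s1 h, .s2 k => sMulS F 1 (3 * (h : ℕ)) 2 (3 * (k : ℕ))
  | .s2 k, .s1 h => sMulS F 1 (3 * (h : ℕ)) 2 (3 * (k : ℕ))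
  | .s2 h, .s2 k => sMulS F 2 (3 * (h : ℕ)) 2 (3 * (k : ℕ))

/-- The commutative bilinear product of `Ĥ`, as a bilinear map. -/
noncomputable def hatMul : HatH F →ₗ[F] HatH F →ₗ[F] HatH F :=
  Finsupp.lift (HatH F →ₗ[F] HatH F) F HatB fun x => Finsupp.lift (HatH F) F HatB (mulB F x)

/-- The product of two elements of `Ĥ`. -/
noncomputable def hmul (x y : HatH F) : HatH F := hatMul F x y


/-- `ĉ_j := −2â₀ + (â_{−j} + â_j)`. -/
noncomputable def cHat (j : ℕ) : HatH F :=
  (-2 : F) • aHat F 0 + (aHat F (-(j : ℤ)) + aHat F (j : ℤ))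

/-- `σ̂_{i,j} := ŝ_{0̄,i} + ŝ_{0̄,j} + ŝ_{−ī,|i−j|} + ŝ_{ī,|i−j|} + ŝ_{−ī,i+j} + ŝ_{ī,i+j}`. -/
noncomputable def sigmaHat (i j : ℕ) : HatH F :=
  sHat F 0 i + sHat F 0 j + sHat F (-(i : ZMod 3)) (Nat.dist i j)
    + sHat F (i : ZMod 3) (Nat.dist i j)
    + sHat F (-(i : ZMod 3)) (i + j) + sHat F (i : ZMod 3) (i + j)

/-!
The coefficients `−2, 1, 1` of `ĉ_j` sum to zero, so in `â_p · ĉ_j` the `â`-parts of (Ĥ1)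
collapse to `−2 ĉ_j`, and in `ĉ_i · ĉ_j` these `ĉ_j`-terms cancel for the same reason. What is
left are `ŝ`-terms; since `ŝ_{±ī,i} = ŝ_{0̄,i}`, they add up to
`σ̂_{i,j} − 5 (ŝ_{0̄,i} + ŝ_{0̄,j})`, which is `σ̂_{i,j}` in characteristic 5.
-/

lemma sHat_zero (r : ZMod 3) : sHat F r 0 = 0 := by
  simp [sHat]

lemma sHat_natCast_self (i : ℕ) : sHat F (i : ZMod 3) i = sHat F 0 i := by
  by_cases h3 : 3 ∣ i
  · rw [(ZMod.natCast_eq_zero_iff i 3).2 h3]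
  · by_cases h : i = 0 <;> simp [sHat, h, h3]

lemma sHat_neg_natCast_self (i : ℕ) : sHat F (-(i : ZMod 3)) i = sHat F 0 i := by
  by_cases h3 : 3 ∣ i
  · rw [(ZMod.natCast_eq_zero_iff i 3).2 h3, neg_zero]
  · by_cases h : i = 0 <;> simp [sHat, h, h3]

lemma hatMul_aHat_aHat (p q : ℤ) :
    hatMul F (aHat F p) (aHat F q) =
      (-2 : F) • (aHat F p + aHat F q) + sHat F (p : ZMod 3) (p - q).natAbs := by
  simp [hatMul, aHat, mulB]

lemma hatMul_aHat_cHat (p : ℤ) (j : ℕ) :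
    hatMul F (aHat F p) (cHat F j) =
      (-2 : F) • cHat F j + (sHat F (p : ZMod 3) (p + j).natAbs
        + sHat F (p : ZMod 3) (p - j).natAbs - (2 : F) • sHat F (p : ZMod 3) p.natAbs) := by
  simp only [cHat, map_add, map_smul, hatMul_aHat_aHat, sub_zero, sub_neg_eq_add]
  module

lemma hmul_cHat_cHat_eq_sigmaHat_sub (i j : ℕ) :
    hmul F (cHat F i) (cHat F j) = sigmaHat F i j - (5 : F) • (sHat F 0 i + sHat F 0 j) := by
  have dist_left : (-(i : ℤ) + j).natAbs = Nat.dist i j := by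
    rw [Nat.dist]; omega
  have dist_right : ((i : ℤ) - j).natAbs = Nat.dist i j := by
    rw [Nat.dist]; omega
  have sum_left : (-(i : ℤ) - j).natAbs = i + j := by omega
  have sum_right : ((i : ℤ) + j).natAbs = i + j := by omega
  rw [hmul, cHat]
  simp only [map_add, map_smul, LinearMap.add_apply, LinearMap.smul_apply, hatMul_aHat_cHat]
  simp only [sigmaHat, Int.cast_zero, Int.cast_neg, Int.cast_natCast, zero_add, zero_sub,
    Int.natAbs_neg, Int.natAbs_natCast, Int.natAbs_zero, sHat_zero, dist_left, dist_right,
    sum_left, sum_right, sHat_natCast_self, sHat_neg_natCast_self]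
  module

theorem cHat_mul_cHat [CharP F 5] (i j : ℕ) :
    hmul F (cHat F i) (cHat F j) = sigmaHat F i j := by
  rw [hmul_cHat_cHat_eq_sigmaHat_sub, CharP.ofNat_eq_zero F 5, zero_smul, sub_zero]

end HatAlgebra
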